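/- arXiv:2004.09709 — 3 statements merged into one kernel-verified Lean document; each statement's English description precedes it below -/
import Mathlib

section
/- Consider the hub model on n nodes with hub set {1,…,n_L}, n_L < n, with parameters ρ ∈ (0,1)^{n_L} summing to 1 and A ∈ [0,1]^{n_L×n} with A_{ii} = 1 for all i ≤ n_L. A single group G ∈ {0,1}^n is generated by first drawing a hub i with probability ρ_i and then including each node j independently with probability A_{ij}. Assume: (i) 0 < ρ_i < 1 for all i; (ii) A_{ij} < 1 for all i ≤ n_L, j ≤ n with i ≠ j; (iii) for every pair i ≠ i' of hubs there exists a follower k ∈ {n_L+1,…,n} with A_{ik} ≠ A_{i'k}. Then the parameters are identifiable: if (ρ̃, Ã) is any parameter pair in the same parameter space (with Ã_{ii}=1) inducing the same distribution on {0,1}^n, then ρ̃ = ρ and Ã = A. -/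
/-!
Summing the distribution over unobserved nodes turns equality of the two distributions into
equality of all marginals `∑ᵢ ρᵢ ∏ⱼ P(node j agrees with sⱼ | hub i)` for partial patterns `s`.
A hub forced absent contributes nothing to such a marginal, since it always belongs to its own
group. Forcing all hubs but `i` absent thus isolates the single term of hub `i`, and comparing
the patterns in which a further node `k` is forced present or absent recovers `Aᵢₖ`; conditions
(i) and (ii) make this term nonzero. This settles the follower columns. For the column of a hub
`i'` we let both `i` and `i'` be present: the marginals with a separating follower `k` free and
forced present are two linear equations in the two hub terms, independent because
`Aᵢₖ ≠ Aᵢ'ₖ`, so the term of hub `i` is isolated again. Finally `ρ` is read off the single-hub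
marginal.
-/

/-- Probability of observing the group `g` under the hub model with
hub probabilities `ρ` and membership matrix `A`. -/
noncomputable def hubModelProb {n nL : ℕ} (ρ : Fin nL → ℝ)
    (A : Fin nL → Fin n → ℝ) (g : Fin n → Bool) : ℝ :=
  ∑ i : Fin nL, ρ i * ∏ j : Fin n, (if g j then A i j else 1 - A i j)

open Finset Function

namespace HubModel

/- A pattern `s : V → Option Bool` prescribes the membership `b` of the nodes with
`s j = some b` and leaves the nodes with `s j = none` free. -/

def matchProb (o : Option Bool) (x : ℝ) : ℝ := o.elim 1 fun b => if b then x else 1 - x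

@[simp] lemma matchProb_none (x : ℝ) : matchProb none x = 1 := rfl
@[simp] lemma matchProb_some_true (x : ℝ) : matchProb (some true) x = x := rfl
@[simp] lemma matchProb_some_false (x : ℝ) : matchProb (some false) x = 1 - x := rfl

def completions (o : Option Bool) : Finset Bool := o.elim univ singleton

lemma matchProb_eq_sum_completions (o : Option Bool) (x : ℝ) :
    matchProb o x = ∑ b ∈ completions o, matchProb (some b) x := by
  rcases o with _ | b <;> simp [completions]

section Rows

variable {V : Type*} [Fintype V]

def rowProb (s : V → Option Bool) (a : V → ℝ) : ℝ := ∏ j, matchProb (s j) (a j)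

lemma rowProb_pos {s : V → Option Bool} {a : V → ℝ} (h : ∀ j, 0 < matchProb (s j) (a j)) :
    0 < rowProb s a :=
  prod_pos fun j _ => h j

variable [DecidableEq V]

lemma rowProb_eq_sum_completions (s : V → Option Bool) (a : V → ℝ) :
    rowProb s a = ∑ g ∈ Fintype.piFinset fun j => completions (s j),
      rowProb (fun j => some (g j)) a := by
  calc rowProb s a = ∏ j, ∑ b ∈ completions (s j), matchProb (some b) (a j) :=
        prod_congr rfl fun j _ => matchProb_eq_sum_completions _ _
    _ = _ := prod_univ_sum _ _

lemma rowProb_update (s : V → Option Bool) (k : V) (o : Option Bool) (a : V → ℝ) :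
    rowProb (update s k o) a = matchProb o (a k) * rowProb (update s k none) a := by
  rw [rowProb, rowProb, ← mul_prod_erase univ _ (mem_univ k),
    ← mul_prod_erase univ (fun j => matchProb (update s k none j) (a j)) (mem_univ k)]
  simp only [update_self, matchProb_none, one_mul]
  exact congrArg _ (prod_congr rfl fun j hj => by
    rw [update_of_ne (ne_of_mem_erase hj), update_of_ne (ne_of_mem_erase hj)])

lemma eq_of_mul_rowProb_update_eq {r r' : ℝ} {a a' : V → ℝ} {s : V → Option Bool} {k : V}
    (h : ∀ b : Bool, r' * rowProb (update s k (some b)) a' = r * rowProb (update s k (some b)) a)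
    (hpos : r * rowProb (update s k none) a ≠ 0) :
    a' k = a k := by
  have ht := h true
  have hf := h false
  rw [rowProb_update, rowProb_update (a := a)] at ht hf
  simp only [matchProb_some_true, matchProb_some_false] at ht hf
  have hnone : r' * rowProb (update s k none) a' = r * rowProb (update s k none) a := by
    linear_combination ht + hf
  exact mul_right_cancel₀ hpos (by linear_combination ht - a' k * hnone)

end Rows

section HubPattern

variable {H V : Type*} [Fintype H] [DecidableEq V]

def hubPattern (e : H → V) (i : H) (j : V) : Option Bool :=
  if ∃ h, e h = j then some (decide (j = e i)) else none

lemma hubPattern_apply_of_ne {e : H → V} (he : Injective e) {i i' : H} (h : i' ≠ i) :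
    hubPattern e i (e i') = some false := by
  simp [hubPattern, he.ne h]

lemma hubPattern_of_notMem_range {e : H → V} {k : V} (hk : k ∉ Set.range e) (i : H) :
    hubPattern e i k = none :=
  if_neg hk

lemma matchProb_hubPattern_pos {e : H → V} {A : H → V → ℝ} {i : H} (hA : A i (e i) = 1)
    (hlt : ∀ j, j ≠ e i → A i j < 1) (j : V) :
    0 < matchProb (hubPattern e i j) (A i j) := by
  unfold hubPattern
  split_ifs
  · by_cases hj : j = e i
    · simp [hj, hA]
    · simpa [hj] using hlt j hj
  · simp

end HubPattern

section Mixture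

variable {H V : Type*} [Fintype H] [Fintype V]

def marginal (ρ : H → ℝ) (A : H → V → ℝ) (s : V → Option Bool) : ℝ :=
  ∑ i, ρ i * rowProb s (A i)

lemma marginal_eq_sum_of_forall_notMem {ρ : H → ℝ} {A : H → V → ℝ} {s : V → Option Bool}
    {e : H → V} (hA : ∀ i, A i (e i) = 1) {S : Finset H}
    (hs : ∀ i ∉ S, s (e i) = some false) :
    marginal ρ A s = ∑ i ∈ S, ρ i * rowProb s (A i) := by
  refine (sum_subset (subset_univ S) fun i _ hi => ?_).symm
  rw [rowProb, prod_eq_zero (mem_univ (e i)) (by rw [hs i hi, hA]; simp), mul_zero]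

variable {e : H → V} {ρ ρ' : H → ℝ} {A A' : H → V → ℝ}

lemma mul_rowProb_eq_of_marginal_eq (hM : ∀ s, marginal ρ' A' s = marginal ρ A s)
    (hA' : ∀ i, A' i (e i) = 1) (hA : ∀ i, A i (e i) = 1) {i : H} {s : V → Option Bool}
    (hs : ∀ j, j ≠ i → s (e j) = some false) :
    ρ' i * rowProb s (A' i) = ρ i * rowProb s (A i) := by
  have hsi : ∀ j ∉ ({i} : Finset H), s (e j) = some false := fun j hj =>
    hs j (by simpa using hj)
  simpa [marginal_eq_sum_of_forall_notMem hA' hsi, marginal_eq_sum_of_forall_notMem hA hsi]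
    using hM s

variable [DecidableEq V]

lemma marginal_eq_sum_completions (ρ : H → ℝ) (A : H → V → ℝ) (s : V → Option Bool) :
    marginal ρ A s = ∑ g ∈ Fintype.piFinset fun j => completions (s j),
      marginal ρ A (fun j => some (g j)) := by
  simp only [marginal, rowProb_eq_sum_completions s, mul_sum]
  exact sum_comm

lemma rowProb_update_hubPattern_pos {e : H → V} {A : H → V → ℝ} {i : H} (hA : A i (e i) = 1)
    (hlt : ∀ j, j ≠ e i → A i j < 1) (k : V) :
    0 < rowProb (update (hubPattern e i) k none) (A i) :=
  rowProb_pos fun j => by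
    rcases eq_or_ne j k with rfl | hj
    · simp
    · rw [update_of_ne hj]
      exact matchProb_hubPattern_pos hA hlt j

lemma mul_rowProb_eq_of_separating (hM : ∀ s, marginal ρ' A' s = marginal ρ A s)
    (hA' : ∀ i, A' i (e i) = 1) (hA : ∀ i, A i (e i) = 1) {i i' : H} (hne : i ≠ i') {k : V}
    (hk : A i k ≠ A i' k) (hk' : A' i k = A i k) (hk'' : A' i' k = A i' k)
    {s : V → Option Bool} (hsk : s k = none)
    (hs : ∀ j, j ≠ i → j ≠ i' → s (e j) = some false) :
    ρ' i * rowProb s (A' i) = ρ i * rowProb s (A i) := by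
  classical
  have pair : ∀ o : Option Bool,
      ρ' i * rowProb (update s k o) (A' i) + ρ' i' * rowProb (update s k o) (A' i') =
        ρ i * rowProb (update s k o) (A i) + ρ i' * rowProb (update s k o) (A i') := by
    intro o
    have hso : ∀ j ∉ ({i, i'} : Finset H), update s k o (e j) = some false := by
      intro j hj
      simp only [mem_insert, mem_singleton, not_or] at hj
      have hfalse := hs j hj.1 hj.2
      rwa [update_of_ne fun h => by simp [h, hsk] at hfalse]
    have := hM (update s k o)
    rwa [marginal_eq_sum_of_forall_notMem hA' hso, marginal_eq_sum_of_forall_notMem hA hso,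
      sum_pair hne, sum_pair hne] at this
  have hupd : update s k none = s := hsk ▸ update_eq_self k s
  have h0 := pair none
  have h1 := pair (some true)
  rw [hupd] at h0
  simp only [rowProb_update _ k (some true), hupd, matchProb_some_true, hk', hk''] at h1
  have hprod : (ρ' i * rowProb s (A' i) - ρ i * rowProb s (A i)) * (A i k - A i' k) = 0 := by
    linear_combination h1 - A i' k * h0
  rcases mul_eq_zero.1 hprod with h | h
  · linarith
  · exact absurd (sub_eq_zero.1 h) hk

theorem eq_of_marginal_eq (he : Injective e) (hρ : ∀ i, 0 < ρ i) (hA : ∀ i, A i (e i) = 1)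
    (hlt : ∀ i j, j ≠ e i → A i j < 1)
    (hsep : ∀ i i', i ≠ i' → ∃ k, k ∉ Set.range e ∧ A i k ≠ A i' k)
    (hA' : ∀ i, A' i (e i) = 1) (hM : ∀ s, marginal ρ' A' s = marginal ρ A s) :
    ρ' = ρ ∧ A' = A := by
  have hpos : ∀ i k, ρ i * rowProb (update (hubPattern e i) k none) (A i) ≠ 0 := fun i k =>
    (mul_pos (hρ i) (rowProb_update_hubPattern_pos (hA i) (hlt i) k)).ne'
  have follower : ∀ i k, k ∉ Set.range e → A' i k = A i k := fun i k hk =>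
    eq_of_mul_rowProb_update_eq (fun b => mul_rowProb_eq_of_marginal_eq hM hA' hA fun j hj => by
      rw [update_of_ne fun h => hk ⟨j, h⟩, hubPattern_apply_of_ne he hj]) (hpos i k)
  have hub : ∀ i i', i ≠ i' → A' i (e i') = A i (e i') := by
    intro i i' hne
    obtain ⟨k, hkr, hk⟩ := hsep i i' hne
    refine eq_of_mul_rowProb_update_eq (r' := ρ' i) (fun b => ?_) (hpos i (e i'))
    cases b
    -- `hubPattern e i` already forces hub `i'` to be absent
    · rw [← hubPattern_apply_of_ne he hne.symm, update_eq_self]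
      exact mul_rowProb_eq_of_marginal_eq hM hA' hA fun j hj => hubPattern_apply_of_ne he hj
    · refine mul_rowProb_eq_of_separating hM hA' hA hne hk (follower i k hkr)
        (follower i' k hkr) ?_ fun j hj hj' => ?_
      · rw [update_of_ne fun h => hkr ⟨i', h.symm⟩, hubPattern_of_notMem_range hkr]
      · rw [update_of_ne (he.ne hj'), hubPattern_apply_of_ne he hj]
  have hAeq : A' = A := by
    funext i j
    by_cases hj : j ∈ Set.range e
    · obtain ⟨i', rfl⟩ := hj
      rcases eq_or_ne i i' with rfl | hne
      · rw [hA', hA]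
      · exact hub i i' hne
    · exact follower i j hj
  subst hAeq
  refine ⟨funext fun i => mul_right_cancel₀ ?_ (mul_rowProb_eq_of_marginal_eq hM hA' hA
    fun j hj => hubPattern_apply_of_ne he hj), rfl⟩
  exact (rowProb_pos (matchProb_hubPattern_pos (hA i) (hlt i))).ne'

end Mixture

lemma hubModelProb_eq_marginal {n nL : ℕ} (ρ : Fin nL → ℝ) (A : Fin nL → Fin n → ℝ)
    (g : Fin n → Bool) : hubModelProb ρ A g = marginal ρ A (fun j => some (g j)) :=
  rfl

lemma marginal_eq_of_hubModelProb_eq {n nL : ℕ} {ρ ρ' : Fin nL → ℝ} {A A' : Fin nL → Fin n → ℝ}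
    (h : ∀ g, hubModelProb ρ' A' g = hubModelProb ρ A g) (s : Fin n → Option Bool) :
    marginal ρ' A' s = marginal ρ A s := by
  rw [marginal_eq_sum_completions, marginal_eq_sum_completions]
  exact sum_congr rfl fun g _ => by simpa only [hubModelProb_eq_marginal] using h g

end HubModel

theorem stmt_2_general (n nL : ℕ) (hnL : nL < n)
    (ρ ρt : Fin nL → ℝ) (A At : Fin nL → Fin n → ℝ)
    -- true parameters lie in the parameter space
    (hρ : ∀ i, 0 < ρ i ∧ ρ i < 1)
    (hAdiag : ∀ i, A i (Fin.castLE hnL.le i) = 1)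
    -- condition (ii)
    (hAlt : ∀ i j, j ≠ Fin.castLE hnL.le i → A i j < 1)
    -- condition (iii)
    (hsep : ∀ i i' : Fin nL, i ≠ i' → ∃ k : Fin n, nL ≤ (k : ℕ) ∧ A i k ≠ A i' k)
    -- candidate parameters lie in the parameter space
    (hAtdiag : ∀ i, At i (Fin.castLE hnL.le i) = 1)
    -- same induced distribution on {0,1}^n
    (hsame : ∀ g : Fin n → Bool, hubModelProb ρt At g = hubModelProb ρ A g) :
    ρt = ρ ∧ At = A := by
  have hsep' : ∀ i i', i ≠ i' → ∃ k, k ∉ Set.range (Fin.castLE hnL.le) ∧ A i k ≠ A i' k := by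
    intro i i' hne
    obtain ⟨k, hk, hAk⟩ := hsep i i' hne
    exact ⟨k, by simpa [Fin.range_castLE] using hk, hAk⟩
  exact HubModel.eq_of_marginal_eq (Fin.castLE_injective hnL.le) (fun i => (hρ i).1) hAdiag hAlt
    hsep' hAtdiag (HubModel.marginal_eq_of_hubModelProb_eq hsame)

theorem stmt_2 (n nL : ℕ) (hnL : nL < n)
    (ρ ρt : Fin nL → ℝ) (A At : Fin nL → Fin n → ℝ)
    -- true parameters lie in the parameter space
    (hρ : ∀ i, 0 < ρ i ∧ ρ i < 1) (hρsum : ∑ i, ρ i = 1)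
    (hA01 : ∀ i j, 0 ≤ A i j ∧ A i j ≤ 1)
    (hAdiag : ∀ i, A i (Fin.castLE hnL.le i) = 1)
    -- condition (ii)
    (hAlt : ∀ i j, j ≠ Fin.castLE hnL.le i → A i j < 1)
    -- condition (iii)
    (hsep : ∀ i i' : Fin nL, i ≠ i' → ∃ k : Fin n, nL ≤ (k : ℕ) ∧ A i k ≠ A i' k)
    -- candidate parameters lie in the parameter space
    (hρt : ∀ i, 0 ≤ ρt i ∧ ρt i ≤ 1) (hρtsum : ∑ i, ρt i = 1)
    (hAt01 : ∀ i j, 0 ≤ At i j ∧ At i j ≤ 1)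
    (hAtdiag : ∀ i, At i (Fin.castLE hnL.le i) = 1)
    -- same induced distribution on {0,1}^n
    (hsame : ∀ g : Fin n → Bool, hubModelProb ρt At g = hubModelProb ρ A g) :
    ρt = ρ ∧ At = A :=
  stmt_2_general n nL hnL ρ ρt A At hρ hAdiag hAlt hsep hAtdiag hsame
end

section
/- Let x, x̃, y, ỹ be real numbers with y > 0, and let π_k, π_{k'}, A_k, A_{k'}, Ã_k, Ã_{k'} ∈ [0,1] with π_k ≠ A_k and π_{k'} ≠ A_{k'}. Suppose: x̃ + ỹ = x + y; x̃·π_k + ỹ·Ã_k = x·π_k + y·A_k; x̃·π_{k'} + ỹ·Ã_{k'} = x·π_{k'} + y·A_{k'}; and x̃·π_k·π_{k'} + ỹ·Ã_k·Ã_{k'} = x·π_k·π_{k'} + y·A_k·A_{k'}. If ỹ ≠ 0, then ỹ = y and x̃ = x. -/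
/-!
Eliminating `xt - x = y - yt` from the first- and second-order moment equations leaves
`yt * (bk - pk) = y * (ak - pk)` and its analogue for `k'`; multiplying the mixed moment
equation by `yt` and substituting these gives `y (ak - pk) (ak' - pk') (yt - y) = 0`.
-/

section MixtureMoments

variable {R : Type*} [CommRing R]

theorem mixture_moments_cancel {x xt y yt pk pk' ak ak' bk bk' : R}
    (h0 : xt + yt = x + y)
    (h1 : xt * pk + yt * bk = x * pk + y * ak)
    (h2 : xt * pk' + yt * bk' = x * pk' + y * ak')
    (h3 : xt * pk * pk' + yt * bk * bk' = x * pk * pk' + y * ak * ak') :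
    y * (ak - pk) * (ak' - pk') * (yt - y) = 0 := by
  have e1 : yt * bk = yt * pk + y * (ak - pk) := by linear_combination h1 - pk * h0
  have e2 : yt * bk' = yt * pk' + y * (ak' - pk') := by linear_combination h2 - pk' * h0
  linear_combination (-yt) * h3 + yt * bk' * e1 + (yt * pk + y * (ak - pk)) * e2 +
    yt * pk * pk' * h0

theorem mixture_weights_eq_of_moments_eq [NoZeroDivisors R]
    {x xt y yt pk pk' ak ak' bk bk' : R} (hy : y ≠ 0) (hk : pk ≠ ak) (hk' : pk' ≠ ak')
    (h0 : xt + yt = x + y)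
    (h1 : xt * pk + yt * bk = x * pk + y * ak)
    (h2 : xt * pk' + yt * bk' = x * pk' + y * ak')
    (h3 : xt * pk * pk' + yt * bk * bk' = x * pk * pk' + y * ak * ak') :
    yt = y ∧ xt = x := by
  have hyt : yt = y := by
    have hcoef : y * (ak - pk) * (ak' - pk') ≠ 0 :=
      mul_ne_zero (mul_ne_zero hy (sub_ne_zero.mpr hk.symm)) (sub_ne_zero.mpr hk'.symm)
    exact sub_eq_zero.mp ((mul_eq_zero.mp (mixture_moments_cancel h0 h1 h2 h3)).resolve_left hcoef)
  exact ⟨hyt, add_right_cancel (hyt ▸ h0)⟩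

end MixtureMoments

theorem stmt_13_general (x xt y yt : ℝ) (hy : 0 < y)
    (πk πk' Ak Ak' Atk Atk' : ℝ)
    (hne : πk ≠ Ak) (hne' : πk' ≠ Ak')
    (h0 : xt + yt = x + y)
    (h1 : xt * πk + yt * Atk = x * πk + y * Ak)
    (h2 : xt * πk' + yt * Atk' = x * πk' + y * Ak')
    (h3 : xt * πk * πk' + yt * Atk * Atk' = x * πk * πk' + y * Ak * Ak') :
    yt = y ∧ xt = x :=
  mixture_weights_eq_of_moments_eq hy.ne' hne hne' h0 h1 h2 h3

theorem stmt_13 (x xt y yt : ℝ) (hy : 0 < y)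
    (πk πk' Ak Ak' Atk Atk' : ℝ)
    (hπk : 0 ≤ πk ∧ πk ≤ 1) (hπk' : 0 ≤ πk' ∧ πk' ≤ 1)
    (hAk : 0 ≤ Ak ∧ Ak ≤ 1) (hAk' : 0 ≤ Ak' ∧ Ak' ≤ 1)
    (hAtk : 0 ≤ Atk ∧ Atk ≤ 1) (hAtk' : 0 ≤ Atk' ∧ Atk' ≤ 1)
    (hne : πk ≠ Ak) (hne' : πk' ≠ Ak')
    (h0 : xt + yt = x + y)
    (h1 : xt * πk + yt * Atk = x * πk + y * Ak)
    (h2 : xt * πk' + yt * Atk' = x * πk' + y * Ak')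
    (h3 : xt * πk * πk' + yt * Atk * Atk' = x * πk * πk' + y * Ak * Ak')
    (hyt : yt ≠ 0) :
    yt = y ∧ xt = x :=
  stmt_13_general x xt y yt hy πk πk' Ak Ak' Atk Atk' hne hne' h0 h1 h2 h3
end

section
/- Consider the hub model with a null component on n nodes with hub set {1,…,n_L}: P(G = g) = ρ₀ ∏_j π_j^{g_j}(1−π_j)^{1−g_j} + Σ_{i=1}^{n_L} ρ_i ∏_j A_{ij}^{g_j}(1−A_{ij})^{1−g_j}, where Σ_{i=0}^{n_L} ρ_i = 1 and A_{ii} = 1 for i = 1,…,n_L. Suppose the parameters are identified on the followers in the following sense: ρ̃₀∏_{j=1}^n(1−π̃_j) = ρ₀∏_{j=1}^n(1−π_j) and for each follower k ∈ {n_L+1,…,n}, ρ̃₀π̃_k∏_{j≠k}(1−π̃_j) = ρ₀π_k∏_{j≠k}(1−π_j). Then, if all π_j, π̃_j < 1 and ρ₀, ρ̃₀ > 0, it follows that π̃_k = π_k for all k = n_L+1,…,n, and ρ̃₀∏_{j=1}^{n_L}(1−π̃_j) = ρ₀∏_{j=1}^{n_L}(1−π_j). -/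
/-!
Write `a = ρ̃₀ ∏_{j ≠ k} (1 - π̃_j)` and `b = ρ₀ ∏_{j ≠ k} (1 - π_j)`. The empty-group and
singleton equations read `a (1 - π̃_k) = b (1 - π_k)` and `a π̃_k = b π_k`; adding them gives
`a = b`, and `a ≠ 0` then forces `π̃_k = π_k`. Once the followers' factors agree, they cancel from
the empty-group equation, leaving the equation over the hubs.
-/

theorem eq_of_mul_one_sub_eq_of_mul_eq {R : Type*} [CommRing R] [IsDomain R]
    {a b x y : R} (ha : a ≠ 0) (h₀ : a * (1 - x) = b * (1 - y)) (h₁ : a * x = b * y) :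
    x = y := by
  have hab : a = b := by linear_combination h₀ + h₁
  subst hab
  exact mul_left_cancel₀ ha h₁

theorem Finset.apply_eq_of_mul_prod_one_sub_eq {ι R : Type*} [DecidableEq ι]
    [CommRing R] [IsDomain R]
    {s : Finset ι} {k : ι} (hk : k ∈ s) {c d : R} {x y : ι → R} (hc : c ≠ 0)
    (hx : ∀ i ∈ s, x i ≠ 1)
    (h₀ : c * ∏ i ∈ s, (1 - x i) = d * ∏ i ∈ s, (1 - y i))
    (h₁ : c * x k * ∏ i ∈ s.erase k, (1 - x i) = d * y k * ∏ i ∈ s.erase k, (1 - y i)) :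
    x k = y k := by
  have hne : c * ∏ i ∈ s.erase k, (1 - x i) ≠ 0 :=
    mul_ne_zero hc <| prod_ne_zero_iff.2 fun i hi => sub_ne_zero.2 (hx i (mem_of_mem_erase hi)).symm
  refine eq_of_mul_one_sub_eq_of_mul_eq (b := d * ∏ i ∈ s.erase k, (1 - y i)) hne ?_ ?_
  · rw [← mul_prod_erase s (fun i => 1 - x i) hk,
      ← mul_prod_erase s (fun i => 1 - y i) hk] at h₀
    linear_combination h₀
  · linear_combination h₁

theorem Finset.mul_prod_filter_eq_of_mul_prod_eq {ι M : Type*} [CommMonoidWithZero M]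
    [Nontrivial M] [IsCancelMulZero M]
    {s : Finset ι} (p : ι → Prop) [DecidablePred p] {c d : M} {f g : ι → M}
    (h : c * ∏ i ∈ s, f i = d * ∏ i ∈ s, g i) (hfg : ∀ i ∈ s, ¬ p i → f i = g i)
    (hf : ∀ i ∈ s, ¬ p i → f i ≠ 0) :
    c * ∏ i ∈ s.filter p, f i = d * ∏ i ∈ s.filter p, g i := by
  have hrest : ∏ i ∈ s.filter (¬ p ·), f i = ∏ i ∈ s.filter (¬ p ·), g i :=
    prod_congr rfl fun i hi => hfg i (mem_filter.1 hi).1 (mem_filter.1 hi).2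
  have hne : ∏ i ∈ s.filter (¬ p ·), f i ≠ 0 :=
    prod_ne_zero_iff.2 fun i hi => hf i (mem_filter.1 hi).1 (mem_filter.1 hi).2
  apply mul_right_cancel₀ hne
  calc c * (∏ i ∈ s.filter p, f i) * ∏ i ∈ s.filter (¬ p ·), f i
      = c * ∏ i ∈ s, f i := by rw [mul_assoc, prod_filter_mul_prod_filter_not]
    _ = d * ∏ i ∈ s, g i := h
    _ = d * (∏ i ∈ s.filter p, g i) * ∏ i ∈ s.filter (¬ p ·), f i := by
      rw [hrest, mul_assoc, prod_filter_mul_prod_filter_not]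

theorem stmt_14_general (n nL : ℕ)
    (ρ₀ ρt₀ : ℝ) (hρt₀ : 0 < ρt₀)
    (π πt : Fin n → ℝ) (hπt : ∀ j, πt j < 1)
    -- probability of the empty group matches
    (hempty : ρt₀ * ∏ j : Fin n, (1 - πt j) = ρ₀ * ∏ j : Fin n, (1 - π j))
    -- probability of each follower singleton {k} matches
    (hsingle : ∀ k : Fin n, nL ≤ (k : ℕ) →
      ρt₀ * πt k * ∏ j ∈ Finset.univ.erase k, (1 - πt j) =
        ρ₀ * π k * ∏ j ∈ Finset.univ.erase k, (1 - π j)) :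
    (∀ k : Fin n, nL ≤ (k : ℕ) → πt k = π k) ∧
      ρt₀ * ∏ j ∈ Finset.univ.filter (fun j : Fin n => (j : ℕ) < nL), (1 - πt j) =
        ρ₀ * ∏ j ∈ Finset.univ.filter (fun j : Fin n => (j : ℕ) < nL), (1 - π j) := by
  have hfollowers : ∀ k : Fin n, nL ≤ (k : ℕ) → πt k = π k := fun k hk =>
    Finset.apply_eq_of_mul_prod_one_sub_eq (Finset.mem_univ k) hρt₀.ne'
      (fun j _ => (hπt j).ne) hempty (hsingle k hk)
  refine ⟨hfollowers, Finset.mul_prod_filter_eq_of_mul_prod_eq _ hempty ?_ ?_⟩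
  · intro j _ hj
    rw [hfollowers j (not_lt.1 hj)]
  · exact fun j _ _ => sub_ne_zero.2 (hπt j).ne'

theorem stmt_14 (n nL : ℕ) (hnn : nL ≤ n)
    (ρ₀ ρt₀ : ℝ) (hρ₀ : 0 < ρ₀) (hρt₀ : 0 < ρt₀)
    (π πt : Fin n → ℝ) (hπ : ∀ j, π j < 1) (hπt : ∀ j, πt j < 1)
    -- probability of the empty group matches
    (hempty : ρt₀ * ∏ j : Fin n, (1 - πt j) = ρ₀ * ∏ j : Fin n, (1 - π j))
    -- probability of each follower singleton {k} matches
    (hsingle : ∀ k : Fin n, nL ≤ (k : ℕ) →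
      ρt₀ * πt k * ∏ j ∈ Finset.univ.erase k, (1 - πt j) =
        ρ₀ * π k * ∏ j ∈ Finset.univ.erase k, (1 - π j)) :
    (∀ k : Fin n, nL ≤ (k : ℕ) → πt k = π k) ∧
      ρt₀ * ∏ j ∈ Finset.univ.filter (fun j : Fin n => (j : ℕ) < nL), (1 - πt j) =
        ρ₀ * ∏ j ∈ Finset.univ.filter (fun j : Fin n => (j : ℕ) < nL), (1 - π j) :=
  stmt_14_general n nL ρ₀ ρt₀ hρt₀ π πt hπt hempty hsingle
end
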